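/- Let p be a prime, 1 < r < ∞ and α > 0. For every τ ∈ ℚ_p with τ ≠ 0 and every f in the block space 𝔅_{r,α}(ℚ_p), the dilated function D_τ f, defined by (D_τ f)(x) = f(τx), belongs to 𝔅_{r,α}(ℚ_p) and satisfies ‖D_τ f‖_{𝔅_{r,α}(ℚ_p)} ≤ 2 |τ|_p^{-(1/r + α)} ‖f‖_{𝔅_{r,α}(ℚ_p)}. -/

import Mathlib

open MeasureTheory ENNReal Pointwise

noncomputable section

/-- The ball `B^n = {x ∈ ℚ_p : |x|_p ≤ p^n}`. -/
def pBall (p : ℕ) [Fact p.Prime] (n : ℤ) : Set ℚ_[p] := {x : ℚ_[p] | ‖x‖ ≤ (p : ℝ) ^ n}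

variable {p : ℕ} [Fact p.Prime] [MeasurableSpace ℚ_[p]]

/-- A central `(r, α)`-block: supported in some ball `B^n` with `‖a‖_{L^r} ≤ |B^n|^{-α}`. -/
def IsCentralBlock (μ : Measure ℚ_[p]) (r α : ℝ) (a : ℚ_[p] → ℂ) : Prop :=
  ∃ n : ℤ, Function.support a ⊆ pBall p n ∧
    eLpNorm a (ENNReal.ofReal r) μ ≤ μ (pBall p n) ^ (-α)

/-- A decomposition `f = ∑ λ_k a_k` into central `(r, α)`-blocks. -/
def IsBlockDecomp (μ : Measure ℚ_[p]) (r α : ℝ) (f : ℚ_[p] → ℂ)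
    (lam : ℕ → ℂ) (a : ℕ → ℚ_[p] → ℂ) : Prop :=
  (∀ k, IsCentralBlock μ r α (a k)) ∧ Summable (fun k => ‖lam k‖) ∧
    ∀ x, f x = ∑' k, lam k * a k x

/-- Membership in the block space `𝔅_{r,α}(ℚ_p)`. -/
def MemBlockSpace (μ : Measure ℚ_[p]) (r α : ℝ) (f : ℚ_[p] → ℂ) : Prop :=
  ∃ lam a, IsBlockDecomp μ r α f lam a

/-- The block space norm `‖f‖_{𝔅_{r,α}(ℚ_p)}`. -/
def blockNorm (μ : Measure ℚ_[p]) (r α : ℝ) (f : ℚ_[p] → ℂ) : ℝ :=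
  sInf {t : ℝ | ∃ lam a, IsBlockDecomp μ r α f lam a ∧ t = ∑' k, ‖lam k‖}

/-- The central Morrey norm `‖f‖_{M_{r,α}(ℚ_p)}`. -/
def morreyNorm (μ : Measure ℚ_[p]) (r α : ℝ) (f : ℚ_[p] → ℂ) : ℝ≥0∞ :=
  ⨆ k : ℤ,
    (μ (pBall p k) ^ (-(α * r)) * ∫⁻ x in pBall p k, ENNReal.ofReal ‖f x‖ ^ r ∂μ) ^ (1 / r)

end


namespace DilAux

open MeasureTheory ENNReal

variable {p : ℕ} [Fact p.Prime]

lemma p_pos : (0:ℝ) < (p:ℝ) := by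
  exact_mod_cast (Fact.out : p.Prime).pos

lemma p_ne_zero : ((p:ℝ)) ≠ 0 := ne_of_gt p_pos

lemma p_cast_ne_zero : ((p:ℚ_[p]) : ℚ_[p]) ≠ 0 := by
  exact_mod_cast (Nat.cast_ne_zero (R := ℚ_[p])).mpr (Fact.out : p.Prime).ne_zero

lemma P_ne_zero : ((p : ℝ≥0∞)) ≠ 0 := by
  exact_mod_cast (Nat.cast_ne_zero (R := ℝ≥0∞)).mpr (Fact.out : p.Prime).ne_zero

omit [Fact p.Prime] in
lemma P_ne_top : ((p : ℝ≥0∞)) ≠ ⊤ := natCast_ne_top p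

lemma Pz_ne_zero (k : ℤ) : ((p : ℝ≥0∞)) ^ k ≠ 0 :=
  (ENNReal.zpow_pos P_ne_zero P_ne_top k).ne'

lemma Pz_ne_top (k : ℤ) : ((p : ℝ≥0∞)) ^ k ≠ ⊤ :=
  (ENNReal.zpow_lt_top P_ne_zero P_ne_top k).ne

lemma Pz_rpow_ne_top (k : ℤ) (y : ℝ) : (((p : ℝ≥0∞)) ^ k) ^ y ≠ ⊤ := by
  simp [ENNReal.rpow_eq_top_iff, Pz_ne_zero k, Pz_ne_top k]

/-- `ofReal (p^k) = p^k` in `ℝ≥0∞`. -/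
lemma ofReal_p_zpow (k : ℤ) : ENNReal.ofReal ((p:ℝ) ^ k) = ((p : ℝ≥0∞)) ^ k := by
  rw [← Real.rpow_intCast, ← ENNReal.ofReal_rpow_of_pos p_pos, ENNReal.ofReal_natCast,
    ENNReal.rpow_intCast]

lemma measurableSet_pBall [MeasurableSpace ℚ_[p]] [BorelSpace ℚ_[p]] (n : ℤ) :
    MeasurableSet (pBall p n) :=
  (isClosed_le continuous_norm continuous_const).measurableSet

/-- Multiplication by a nonzero scalar, as an additive equivalence. -/
noncomputable def dilEquiv (τ : ℚ_[p]) (hτ : τ ≠ 0) : ℚ_[p] ≃+ ℚ_[p] where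
  toFun x := τ * x
  invFun x := τ⁻¹ * x
  left_inv x := by field_simp
  right_inv x := by field_simp
  map_add' := mul_add τ

/-- The corresponding homeomorphism. -/
noncomputable def dilHomeo (τ : ℚ_[p]) (hτ : τ ≠ 0) : ℚ_[p] ≃ₜ ℚ_[p] where
  toEquiv := (dilEquiv τ hτ).toEquiv
  continuous_toFun := continuous_const.mul continuous_id
  continuous_invFun := continuous_const.mul continuous_id

variable [MeasurableSpace ℚ_[p]] [BorelSpace ℚ_[p]]

lemma map_isAddHaar (μ : Measure ℚ_[p]) [μ.IsAddHaarMeasure] (τ : ℚ_[p]) (hτ : τ ≠ 0) :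
    (μ.map (fun x => τ * x)).IsAddHaarMeasure := by
  have h : (fun x : ℚ_[p] => τ * x) = ⇑(dilEquiv τ hτ) := rfl
  rw [h]
  exact AddEquiv.isAddHaarMeasure_map μ (dilEquiv τ hτ)
    (continuous_const.mul continuous_id) (continuous_const.mul continuous_id)

variable (μ : Measure ℚ_[p]) [μ.IsAddHaarMeasure]

/-- The scaling factor of the dilation `x ↦ τ * x`. -/
noncomputable def sc (τ : ℚ_[p]) : ℝ≥0∞ := μ.map (fun x => τ * x) (pBall p 0)

variable (hμ : μ (pBall p 0) = 1)
include hμ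

lemma map_eq_smul (τ : ℚ_[p]) (hτ : τ ≠ 0) :
    μ.map (fun x => τ * x) = sc μ τ • μ := by
  haveI := map_isAddHaar μ τ hτ
  have h1 := Measure.isAddLeftInvariant_eq_smul (μ.map (fun x => τ * x)) μ
  have h3 : sc μ τ = (↑((μ.map (fun x => τ * x)).addHaarScalarFactor μ) : ℝ≥0∞) := by
    have h2 := congrArg (fun ν : Measure ℚ_[p] => ν (pBall p 0)) h1
    rw [sc]
    simp only [Measure.smul_apply, ENNReal.smul_def, smul_eq_mul, hμ, mul_one] at h2
    exact h2
  ext s hs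
  rw [h1]
  simp only [Measure.smul_apply, smul_eq_mul, ENNReal.smul_def, h3]

lemma sc_apply (τ : ℚ_[p]) (hτ : τ ≠ 0) {s : Set ℚ_[p]} (hs : MeasurableSet s) :
    μ ((fun x => τ * x) ⁻¹' s) = sc μ τ * μ s := by
  have h := congrArg (fun ν : Measure ℚ_[p] => ν s) (map_eq_smul μ hμ τ hτ)
  simpa [Measure.map_apply (measurable_const_mul τ) hs, Measure.smul_apply, smul_eq_mul] using h

lemma sc_mul (σ τ : ℚ_[p]) (hσ : σ ≠ 0) (hτ : τ ≠ 0) :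
    sc μ (σ * τ) = sc μ σ * sc μ τ := by
  have hcomp : (fun x : ℚ_[p] => σ * τ * x) = (fun x => σ * x) ∘ (fun x => τ * x) := by
    funext x; simp [mul_assoc]
  have h : μ.map (fun x => σ * τ * x) = (μ.map (fun x => τ * x)).map (fun x => σ * x) := by
    rw [hcomp, ← Measure.map_map (measurable_const_mul σ) (measurable_const_mul τ)]
  rw [sc, h, map_eq_smul μ hμ τ hτ, Measure.map_smul]
  simp [sc, Measure.smul_apply, smul_eq_mul, mul_comm]

lemma sc_one : sc μ (1 : ℚ_[p]) = 1 := by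
  rw [sc]
  simp only [one_mul]
  rw [show (fun x : ℚ_[p] => x) = id from rfl, Measure.map_id]
  exact hμ

lemma sc_unit (u : ℚ_[p]) (hu : ‖u‖ = 1) : sc μ u = 1 := by
  have hu0 : u ≠ 0 := by
    intro h; rw [h] at hu; simp at hu
  have hpre : (fun x : ℚ_[p] => u * x) ⁻¹' (pBall p 0) = pBall p 0 := by
    ext x
    simp only [Set.mem_preimage, pBall, Set.mem_setOf_eq, norm_mul, hu, one_mul]
  rw [sc, Measure.map_apply (measurable_const_mul u) (measurableSet_pBall 0), hpre, hμ]

omit hμ in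
/-- Coset decomposition of the unit ball. -/
lemma ball_zero_eq_union :
    pBall p 0 = ⋃ j ∈ Finset.range p, {x : ℚ_[p] | ‖x - (j : ℚ_[p])‖ ≤ (p:ℝ) ^ (-1 : ℤ)} := by
  ext x
  simp only [Set.mem_iUnion, Finset.mem_range, Set.mem_setOf_eq, pBall, zpow_zero]
  constructor
  · intro hx
    set y : ℤ_[p] := ⟨x, hx⟩ with hy
    refine ⟨y.appr 1, by simpa using PadicInt.appr_lt y 1, ?_⟩
    have hspec := PadicInt.appr_spec 1 y
    rw [Ideal.mem_span_singleton] at hspec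
    obtain ⟨z, hz⟩ := hspec
    have hnorm : ‖y - (y.appr 1 : ℤ_[p])‖ ≤ (p:ℝ)⁻¹ := by
      rw [hz]
      calc ‖(p:ℤ_[p]) ^ 1 * z‖ = ‖(p:ℤ_[p])‖ * ‖z‖ := by rw [pow_one, norm_mul]
        _ ≤ (p:ℝ)⁻¹ * 1 := by
            exact mul_le_mul (le_of_eq PadicInt.norm_p) (PadicInt.norm_le_one z)
              (norm_nonneg z) (by positivity)
        _ = (p:ℝ)⁻¹ := mul_one _
    have hcoe : ‖x - ((y.appr 1 : ℕ) : ℚ_[p])‖ = ‖y - (y.appr 1 : ℤ_[p])‖ := by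
      rw [PadicInt.norm_def]
      push_cast
      rfl
    rw [hcoe]
    simpa [zpow_neg, zpow_one] using hnorm
  · rintro ⟨j, hj, hxj⟩
    have h1 : ‖x - (j:ℚ_[p])‖ ≤ 1 := by
      refine hxj.trans ?_
      rw [zpow_neg, zpow_one]
      exact inv_le_one_of_one_le₀ (by exact_mod_cast (Fact.out : p.Prime).one_lt.le)
    have h2 : ‖(j:ℚ_[p])‖ ≤ 1 := by
      exact_mod_cast Padic.norm_int_le_one (j : ℤ)
    calc ‖x‖ = ‖(x - (j:ℚ_[p])) + (j:ℚ_[p])‖ := by ring_nf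
      _ ≤ max ‖x - (j:ℚ_[p])‖ ‖(j:ℚ_[p])‖ := Padic.nonarchimedean _ _
      _ ≤ 1 := max_le h1 h2

omit hμ in
lemma coset_disjoint :
    (↑(Finset.range p) : Set ℕ).PairwiseDisjoint
      (fun j => {x : ℚ_[p] | ‖x - (j : ℚ_[p])‖ ≤ (p:ℝ) ^ (-1 : ℤ)}) := by
  intro i hi j hj hij
  simp only [Finset.coe_range, Set.mem_Iio] at hi hj
  refine Set.disjoint_left.mpr ?_
  intro x hxi hxj
  simp only [Set.mem_setOf_eq] at hxi hxj
  have hd : ‖((i:ℚ_[p]) - (j:ℚ_[p]))‖ ≤ (p:ℝ) ^ (-1:ℤ) := by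
    have h : (i:ℚ_[p]) - (j:ℚ_[p]) = (x - (j:ℚ_[p])) + (-(x - (i:ℚ_[p]))) := by ring
    rw [h]
    refine le_trans (Padic.nonarchimedean _ _) ?_
    rw [norm_neg]
    exact max_le hxj hxi
  have hlt : ‖(((i:ℤ) - (j:ℤ) : ℤ) : ℚ_[p])‖ < 1 := by
    have h : (((i:ℤ) - (j:ℤ) : ℤ) : ℚ_[p]) = (i:ℚ_[p]) - (j:ℚ_[p]) := by push_cast; ring
    rw [h]
    refine lt_of_le_of_lt hd ?_
    rw [zpow_neg, zpow_one]
    exact inv_lt_one_of_one_lt₀ (by exact_mod_cast (Fact.out : p.Prime).one_lt)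
  rw [Padic.norm_intCast_lt_one_iff] at hlt
  have hz := Int.eq_zero_of_abs_lt_dvd hlt (by
    rw [abs_sub_lt_iff]
    constructor
    · have h1 : (i:ℤ) < p := by exact_mod_cast hi
      omega
    · have h1 : (j:ℤ) < p := by exact_mod_cast hj
      omega)
  exact hij (by exact_mod_cast sub_eq_zero.mp hz)

lemma meas_ball_neg_one : μ (pBall p (-1)) = ((p:ℝ≥0∞))⁻¹ := by
  have hmeas : ∀ j : ℕ, MeasurableSet {x : ℚ_[p] | ‖x - (j : ℚ_[p])‖ ≤ (p:ℝ) ^ (-1 : ℤ)} :=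
    fun j => (isClosed_le (continuous_norm.comp (continuous_id.sub continuous_const))
      continuous_const).measurableSet
  have htrans : ∀ j : ℕ,
      μ {x : ℚ_[p] | ‖x - (j : ℚ_[p])‖ ≤ (p:ℝ) ^ (-1 : ℤ)} = μ (pBall p (-1)) := by
    intro j
    have h : {x : ℚ_[p] | ‖x - (j : ℚ_[p])‖ ≤ (p:ℝ) ^ (-1 : ℤ)}
        = (fun x => -(j:ℚ_[p]) + x) ⁻¹' (pBall p (-1)) := by
      ext x
      simp only [Set.mem_setOf_eq, Set.mem_preimage, pBall]
      rw [show -(j:ℚ_[p]) + x = x - (j:ℚ_[p]) by ring]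
    rw [h, measure_preimage_add]
  have h1 : (1:ℝ≥0∞) = (p : ℝ≥0∞) * μ (pBall p (-1)) := by
    rw [← hμ, ball_zero_eq_union,
      measure_biUnion_finset coset_disjoint (fun j _ => hmeas j)]
    simp only [htrans]
    rw [Finset.sum_const, Finset.card_range, nsmul_eq_mul]
  have h2 := congrArg (fun x => ((p:ℝ≥0∞))⁻¹ * x) h1
  simpa [← mul_assoc, ENNReal.inv_mul_cancel P_ne_zero P_ne_top] using h2.symm

lemma sc_p_inv : sc μ ((p:ℚ_[p]))⁻¹ = ((p:ℝ≥0∞))⁻¹ := by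
  have hpre : (fun x : ℚ_[p] => (p:ℚ_[p])⁻¹ * x) ⁻¹' (pBall p 0) = pBall p (-1) := by
    ext x
    simp only [Set.mem_preimage, pBall, Set.mem_setOf_eq, norm_mul, zpow_zero]
    rw [norm_inv, Padic.norm_p, inv_inv, zpow_neg, zpow_one]
    constructor
    · intro h
      calc ‖x‖ = (p:ℝ)⁻¹ * ((p:ℝ) * ‖x‖) := by
            rw [← mul_assoc, inv_mul_cancel₀ (p_ne_zero (p := p)), one_mul]
        _ ≤ (p:ℝ)⁻¹ * 1 := mul_le_mul_of_nonneg_left h (by positivity)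
        _ = (p:ℝ)⁻¹ := mul_one _
    · intro h
      calc (p:ℝ) * ‖x‖ ≤ (p:ℝ) * (p:ℝ)⁻¹ := mul_le_mul_of_nonneg_left h (by positivity)
        _ = 1 := by field_simp; exact div_self (p_ne_zero (p := p))
  rw [sc, Measure.map_apply (measurable_const_mul _) (measurableSet_pBall 0), hpre,
    meas_ball_neg_one μ hμ]

lemma sc_p : sc μ ((p:ℚ_[p])) = (p:ℝ≥0∞) := by
  have h := sc_mul μ hμ ((p:ℚ_[p])) ((p:ℚ_[p]))⁻¹ p_cast_ne_zero (inv_ne_zero p_cast_ne_zero)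
  rw [mul_inv_cancel₀ p_cast_ne_zero, sc_one μ hμ, sc_p_inv μ hμ] at h
  have h2 := congrArg (fun x => x * (p:ℝ≥0∞)) h
  simpa [mul_assoc, ENNReal.inv_mul_cancel P_ne_zero P_ne_top] using h2.symm

lemma sc_p_pow_nat (n : ℕ) : sc μ ((p:ℚ_[p]) ^ n) = (p:ℝ≥0∞) ^ n := by
  induction n with
  | zero => simpa using sc_one μ hμ
  | succ n ih =>
    rw [pow_succ, sc_mul μ hμ _ _ (pow_ne_zero n p_cast_ne_zero) p_cast_ne_zero, ih,
      sc_p μ hμ, pow_succ]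

lemma sc_p_zpow (k : ℤ) : sc μ ((p:ℚ_[p]) ^ k) = (p:ℝ≥0∞) ^ k := by
  rcases Int.eq_nat_or_neg k with ⟨n, rfl | rfl⟩
  · rw [zpow_natCast, zpow_natCast]
    exact sc_p_pow_nat μ hμ n
  · have hpn : ((p:ℚ_[p]) ^ (n:ℤ)) ≠ 0 := zpow_ne_zero _ p_cast_ne_zero
    have h := sc_mul μ hμ ((p:ℚ_[p]) ^ (-(n:ℤ))) ((p:ℚ_[p]) ^ (n:ℤ))
      (zpow_ne_zero _ p_cast_ne_zero) hpn
    rw [← zpow_add₀ p_cast_ne_zero, neg_add_cancel, zpow_zero, sc_one μ hμ] at h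
    rw [zpow_natCast, sc_p_pow_nat μ hμ] at h
    have h2 := congrArg (fun x => x * ((p:ℝ≥0∞) ^ n)⁻¹) h.symm
    simp only [one_mul, mul_assoc, ENNReal.mul_inv_cancel (pow_ne_zero n P_ne_zero)
      (ENNReal.pow_ne_top P_ne_top), mul_one] at h2
    rw [ENNReal.zpow_neg, zpow_natCast]
    exact h2

/-- The scaling factor of `x ↦ τ x` is `p ^ v(τ) = |τ|_p⁻¹`. -/
lemma sc_eq (τ : ℚ_[p]) (hτ : τ ≠ 0) : sc μ τ = (p:ℝ≥0∞) ^ τ.valuation := by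
  set v := τ.valuation with hv
  set u : ℚ_[p] := τ * (p:ℚ_[p]) ^ (-v) with hu
  have hu0 : u ≠ 0 := mul_ne_zero hτ (zpow_ne_zero _ p_cast_ne_zero)
  have hun : ‖u‖ = 1 := by
    rw [hu, norm_mul, Padic.norm_p_zpow, Padic.norm_eq_zpow_neg_valuation hτ, neg_neg, ← hv,
      ← zpow_add₀ (p_ne_zero (p := p)), neg_add_cancel, zpow_zero]
  have hτu : τ = u * (p:ℚ_[p]) ^ v := by
    rw [hu, mul_assoc, ← zpow_add₀ p_cast_ne_zero, neg_add_cancel, zpow_zero, mul_one]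
  rw [hτu, sc_mul μ hμ u _ hu0 (zpow_ne_zero _ p_cast_ne_zero), sc_unit μ hμ u hun,
    sc_p_zpow μ hμ, one_mul]

/-- Measure of the ball `B^n`. -/
lemma meas_ball (n : ℤ) : μ (pBall p n) = (p:ℝ≥0∞) ^ n := by
  have hτ : ((p:ℚ_[p]) ^ n) ≠ 0 := zpow_ne_zero _ p_cast_ne_zero
  have hpre : (fun x : ℚ_[p] => (p:ℚ_[p]) ^ n * x) ⁻¹' (pBall p 0) = pBall p n := by
    ext x
    simp only [Set.mem_preimage, pBall, Set.mem_setOf_eq, norm_mul, zpow_zero,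
      Padic.norm_p_zpow]
    constructor
    · intro h
      have h2 := mul_le_mul_of_nonneg_left h (le_of_lt (_root_.zpow_pos (p_pos (p := p)) n))
      rw [mul_one, ← mul_assoc, ← zpow_add₀ (p_ne_zero (p := p)), add_neg_cancel, zpow_zero,
        one_mul] at h2
      exact h2
    · intro h
      have h2 := mul_le_mul_of_nonneg_left h (le_of_lt (_root_.zpow_pos (p_pos (p := p)) (-n)))
      rw [← zpow_add₀ (p_ne_zero (p := p)), neg_add_cancel, zpow_zero] at h2
      exact h2
  have h := sc_apply μ hμ _ hτ (measurableSet_pBall 0)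
  rw [hpre, hμ, mul_one, sc_p_zpow μ hμ] at h
  exact h

/-- Change of variables for lower integrals under dilation. -/
lemma lintegral_dilate (τ : ℚ_[p]) (hτ : τ ≠ 0) (g : ℚ_[p] → ℝ≥0∞) :
    ∫⁻ x, g (τ * x) ∂μ = (p:ℝ≥0∞) ^ τ.valuation * ∫⁻ y, g y ∂μ := by
  have h1 : ∫⁻ x, g (τ * x) ∂μ = ∫⁻ y, g y ∂(μ.map (fun x => τ * x)) := by
    have h := MeasureTheory.lintegral_map_equiv (μ := μ) g (dilHomeo τ hτ).toMeasurableEquiv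
    have hcoe : ⇑(dilHomeo τ hτ).toMeasurableEquiv = (fun x : ℚ_[p] => τ * x) := rfl
    rw [hcoe] at h
    exact h.symm
  rw [h1, map_eq_smul μ hμ τ hτ, lintegral_smul_measure, sc_eq μ hμ τ hτ, smul_eq_mul]

omit hμ in
lemma preimage_ball (τ : ℚ_[p]) (hτ : τ ≠ 0) (n : ℤ) :
    (fun x => τ * x) ⁻¹' (pBall p n) = pBall p (n + τ.valuation) := by
  have hnorm : ‖τ‖ = (p:ℝ) ^ (-τ.valuation) := Padic.norm_eq_zpow_neg_valuation hτ
  ext x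
  simp only [Set.mem_preimage, pBall, Set.mem_setOf_eq, norm_mul, hnorm]
  rw [zpow_add₀ (p_ne_zero (p := p))]
  constructor
  · intro h
    have h2 := mul_le_mul_of_nonneg_left h (le_of_lt (_root_.zpow_pos (p_pos (p := p)) τ.valuation))
    rw [← mul_assoc, ← zpow_add₀ (p_ne_zero (p := p)), add_neg_cancel, zpow_zero, one_mul,
      mul_comm ((p:ℝ) ^ τ.valuation)] at h2
    exact h2
  · intro h
    have h2 := mul_le_mul_of_nonneg_left h (le_of_lt (_root_.zpow_pos (p_pos (p := p)) (-τ.valuation)))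
    calc (p:ℝ) ^ (-τ.valuation) * ‖x‖ ≤ (p:ℝ) ^ (-τ.valuation) * ((p:ℝ) ^ n * (p:ℝ) ^ τ.valuation) := h2
      _ = (p:ℝ) ^ n := by
          rw [mul_comm ((p:ℝ) ^ n), ← mul_assoc, ← zpow_add₀ (p_ne_zero (p := p)),
            neg_add_cancel, zpow_zero, one_mul]

/-- Dilating a central block and rescaling gives a central block. -/
lemma block_dilate (r α : ℝ) (hr : 1 < r) (hα : 0 < α) (τ : ℚ_[p]) (hτ : τ ≠ 0)
    (a : ℚ_[p] → ℂ) (ha : IsCentralBlock μ r α a) :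
    IsCentralBlock μ r α (fun x => ((‖τ‖ ^ (1 / r + α) : ℝ) : ℂ) * a (τ * x)) := by
  obtain ⟨n, hsupp, hnorm⟩ := ha
  have hr0 : (0:ℝ) < r := lt_trans one_pos hr
  have hq0 : (ENNReal.ofReal r) ≠ 0 := by
    simp [ENNReal.ofReal_eq_zero, not_le, hr0]
  have hqt : (ENNReal.ofReal r) ≠ ⊤ := ENNReal.ofReal_ne_top
  have hqr : (ENNReal.ofReal r).toReal = r := ENNReal.toReal_ofReal hr0.le
  set v := τ.valuation with hv
  have hτpos : (0:ℝ) < ‖τ‖ := norm_pos_iff.mpr hτ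
  refine ⟨n + v, ?_, ?_⟩
  · intro x hx
    have hax : τ * x ∈ pBall p n := by
      apply hsupp
      simp only [Function.mem_support] at hx ⊢
      intro h0
      apply hx
      simp [h0]
    have hmem : x ∈ (fun x : ℚ_[p] => τ * x) ⁻¹' (pBall p n) := Set.mem_preimage.mpr hax
    rw [preimage_ball τ hτ n] at hmem
    exact hmem
  · rw [eLpNorm_eq_lintegral_rpow_enorm_toReal hq0 hqt, hqr, meas_ball μ hμ n] at hnorm
    set I := ∫⁻ x, ‖a x‖ₑ ^ r ∂μ with hI
    have hIfin : I ≠ ⊤ := by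
      intro htop
      rw [htop, ENNReal.top_rpow_of_pos (by positivity)] at hnorm
      exact Pz_rpow_ne_top n (-α) (top_le_iff.mp hnorm)
    have hb : eLpNorm (fun x => ((‖τ‖ ^ (1 / r + α) : ℝ) : ℂ) * a (τ * x)) (ENNReal.ofReal r) μ
        = (((p:ℝ≥0∞)) ^ (-v)) ^ (1/r + α) * ((((p:ℝ≥0∞)) ^ v) ^ (1/r) * I ^ (1/r)) := by
      have hsm : (fun x => ((‖τ‖ ^ (1 / r + α) : ℝ) : ℂ) * a (τ * x))
          = ((‖τ‖ ^ (1 / r + α) : ℝ) : ℂ) • (fun x => a (τ * x)) := rfl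
      rw [hsm, eLpNorm_const_smul]
      have hcR : ‖((‖τ‖ ^ (1 / r + α) : ℝ) : ℂ)‖ = ‖τ‖ ^ (1 / r + α) := by
        rw [Complex.norm_real, Real.norm_eq_abs, abs_of_pos (Real.rpow_pos_of_pos hτpos _)]
      have hc : ‖((‖τ‖ ^ (1 / r + α) : ℝ) : ℂ)‖ₑ = (((p:ℝ≥0∞)) ^ (-v)) ^ (1/r + α) := by
        rw [← ofReal_norm_eq_enorm, hcR, ← ENNReal.ofReal_rpow_of_pos hτpos]
        congr 1
        rw [Padic.norm_eq_zpow_neg_valuation hτ, ← hv, ofReal_p_zpow]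
      rw [hc]
      congr 1
      rw [eLpNorm_eq_lintegral_rpow_enorm_toReal hq0 hqt, hqr]
      have hint : ∫⁻ x, ‖a (τ * x)‖ₑ ^ r ∂μ = ((p:ℝ≥0∞)) ^ v * I := by
        have h := lintegral_dilate μ hμ τ hτ (fun y => ‖a y‖ₑ ^ r)
        rw [← hv] at h
        exact h
      rw [hint, ENNReal.mul_rpow_of_ne_top (Pz_ne_top v) hIfin]
    rw [hb, meas_ball μ hμ (n+v)]
    calc (((p:ℝ≥0∞)) ^ (-v)) ^ (1/r + α) * ((((p:ℝ≥0∞)) ^ v) ^ (1/r) * I ^ (1/r))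
        ≤ (((p:ℝ≥0∞)) ^ (-v)) ^ (1/r + α) * ((((p:ℝ≥0∞)) ^ v) ^ (1/r) * (((p:ℝ≥0∞)) ^ n) ^ (-α)) :=
          mul_le_mul_right (mul_le_mul_right hnorm _) _
      _ = (((p:ℝ≥0∞)) ^ (n+v)) ^ (-α) := by
          rw [← ENNReal.rpow_intCast ((p:ℝ≥0∞)) (-v), ← ENNReal.rpow_intCast ((p:ℝ≥0∞)) v,
            ← ENNReal.rpow_intCast ((p:ℝ≥0∞)) n, ← ENNReal.rpow_intCast ((p:ℝ≥0∞)) (n+v),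
            ← ENNReal.rpow_mul, ← ENNReal.rpow_mul, ← ENNReal.rpow_mul, ← ENNReal.rpow_mul,
            ← ENNReal.rpow_add _ _ P_ne_zero P_ne_top, ← ENNReal.rpow_add _ _ P_ne_zero P_ne_top]
          congr 1
          push_cast
          ring

end DilAux


open MeasureTheory ENNReal Pointwise in
/-- Boundedness of the dilation operator `D_τ f (x) = f (τ x)` on the
block space `𝔅_{r,α}(ℚ_p)`:
`‖D_τ f‖_{𝔅_{r,α}} ≤ 2 |τ|_p^{-(1/r + α)} ‖f‖_{𝔅_{r,α}}`. -/
theorem dilation_bounded_on_block_space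
    (p : ℕ) [Fact p.Prime] [MeasurableSpace ℚ_[p]] [BorelSpace ℚ_[p]]
    (μ : Measure ℚ_[p]) [μ.IsAddHaarMeasure] (hμ : μ (pBall p 0) = 1)
    (r α : ℝ) (hr : 1 < r) (hα : 0 < α)
    (τ : ℚ_[p]) (hτ : τ ≠ 0) (f : ℚ_[p] → ℂ) (hf : MemBlockSpace μ r α f) :
    MemBlockSpace μ r α (fun x => f (τ * x)) ∧
      blockNorm μ r α (fun x => f (τ * x)) ≤
        2 * ‖τ‖ ^ (-(1 / r + α)) * blockNorm μ r α f := by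
  classical
  obtain ⟨lam0, a0, hd0⟩ := hf
  have hr0 : (0:ℝ) < r := lt_trans one_pos hr
  have hτpos : (0:ℝ) < ‖τ‖ := norm_pos_iff.mpr hτ
  set C : ℝ := ‖τ‖ ^ (-(1 / r + α)) with hC
  have hCpos : 0 < C := Real.rpow_pos_of_pos hτpos _
  have hCinv : C⁻¹ = ‖τ‖ ^ (1 / r + α) := by
    rw [hC, Real.rpow_neg hτpos.le, inv_inv]
  have hCc : ((C:ℝ):ℂ) ≠ 0 := Complex.ofReal_ne_zero.mpr hCpos.ne'
  have key : ∀ lam a, IsBlockDecomp μ r α f lam a →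
      IsBlockDecomp μ r α (fun x => f (τ * x)) (fun k => ((C:ℝ):ℂ) * lam k)
        (fun k x => (((C⁻¹ : ℝ)):ℂ) * a k (τ * x)) := by
    rintro lam a ⟨hblocks, hsum, hpt⟩
    refine ⟨fun k => ?_, ?_, fun x => ?_⟩
    · have hbl := DilAux.block_dilate μ hμ r α hr hα τ hτ (a k) (hblocks k)
      rw [hCinv]
      exact hbl
    · have heq : (fun k => ‖((C:ℝ):ℂ) * lam k‖) = fun k => C * ‖lam k‖ := by
        funext k
        rw [norm_mul, Complex.norm_real, Real.norm_eq_abs, abs_of_pos hCpos]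
      rw [heq]
      exact hsum.mul_left C
    · show f (τ * x) = ∑' k, (((C:ℝ):ℂ) * lam k) * ((((C⁻¹ : ℝ)):ℂ) * a k (τ * x))
      rw [hpt (τ * x)]
      refine tsum_congr fun k => ?_
      calc lam k * a k (τ * x)
          = (((C:ℝ):ℂ) * ((C:ℝ):ℂ)⁻¹) * (lam k * a k (τ * x)) := by
            rw [mul_inv_cancel₀ hCc, one_mul]
        _ = ((C:ℝ):ℂ) * lam k * ((((C⁻¹ : ℝ)):ℂ) * a k (τ * x)) := by
            rw [Complex.ofReal_inv]
            ring
  have hsumC : ∀ lam : ℕ → ℂ, (∑' k, ‖((C:ℝ):ℂ) * lam k‖) = C * ∑' k, ‖lam k‖ := by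
    intro lam
    have heq : (fun k => ‖((C:ℝ):ℂ) * lam k‖) = fun k => C * ‖lam k‖ := by
      funext k
      rw [norm_mul, Complex.norm_real, Real.norm_eq_abs, abs_of_pos hCpos]
    rw [heq, tsum_mul_left]
  refine ⟨⟨_, _, key lam0 a0 hd0⟩, ?_⟩
  -- the norm estimate
  have hS'lb : ∀ t ∈ {t : ℝ | ∃ lam a, IsBlockDecomp μ r α (fun x => f (τ * x)) lam a
      ∧ t = ∑' k, ‖lam k‖}, 0 ≤ t := by
    rintro t ⟨lam, a, hd, rfl⟩
    exact tsum_nonneg fun k => norm_nonneg _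
  have hSlb : ∀ t ∈ {t : ℝ | ∃ lam a, IsBlockDecomp μ r α f lam a
      ∧ t = ∑' k, ‖lam k‖}, 0 ≤ t := by
    rintro t ⟨lam, a, hd, rfl⟩
    exact tsum_nonneg fun k => norm_nonneg _
  have hbdd' : BddBelow {t : ℝ | ∃ lam a, IsBlockDecomp μ r α (fun x => f (τ * x)) lam a
      ∧ t = ∑' k, ‖lam k‖} := ⟨0, hS'lb⟩
  have hSne : {t : ℝ | ∃ lam a, IsBlockDecomp μ r α f lam a
      ∧ t = ∑' k, ‖lam k‖}.Nonempty := ⟨_, lam0, a0, hd0, rfl⟩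
  have hle : ∀ t ∈ {t : ℝ | ∃ lam a, IsBlockDecomp μ r α f lam a ∧ t = ∑' k, ‖lam k‖},
      blockNorm μ r α (fun x => f (τ * x)) ≤ C * t := by
    rintro t ⟨lam, a, hd, rfl⟩
    have hmem : C * (∑' k, ‖lam k‖) ∈ {t : ℝ | ∃ lam a,
        IsBlockDecomp μ r α (fun x => f (τ * x)) lam a ∧ t = ∑' k, ‖lam k‖} :=
      ⟨_, _, key lam a hd, (hsumC lam).symm⟩
    exact csInf_le hbdd' hmem
  have hfnn : 0 ≤ blockNorm μ r α f := Real.sInf_nonneg hSlb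
  have hmain : blockNorm μ r α (fun x => f (τ * x)) ≤ C * blockNorm μ r α f := by
    have hdiv : blockNorm μ r α (fun x => f (τ * x)) / C
        ≤ sInf {t : ℝ | ∃ lam a, IsBlockDecomp μ r α f lam a ∧ t = ∑' k, ‖lam k‖} := by
      refine le_csInf hSne fun t ht => ?_
      rw [div_le_iff₀ hCpos]
      calc blockNorm μ r α (fun x => f (τ * x)) ≤ C * t := hle t ht
        _ = t * C := mul_comm _ _
    rw [div_le_iff₀ hCpos] at hdiv
    calc blockNorm μ r α (fun x => f (τ * x))
        ≤ sInf {t : ℝ | ∃ lam a, IsBlockDecomp μ r α f lam a ∧ t = ∑' k, ‖lam k‖} * C := hdiv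
      _ = C * blockNorm μ r α f := by rw [blockNorm, mul_comm]
  have h2 : C * blockNorm μ r α f ≤ 2 * C * blockNorm μ r α f := by
    nlinarith [mul_nonneg hCpos.le hfnn]
  calc blockNorm μ r α (fun x => f (τ * x)) ≤ C * blockNorm μ r α f := hmain
    _ ≤ 2 * C * blockNorm μ r α f := h2
    _ = 2 * ‖τ‖ ^ (-(1 / r + α)) * blockNorm μ r α f := by rw [hC]
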